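/- If f₁ and f₂ are nonnegative random variables with disjoint supports, then f̂₁ f̂₂ = f̂₂ f̂₁ = 0, and consequently ‖f̂₁ + f̂₂‖ = max(‖f̂₁‖, ‖f̂₂‖). -/

import Mathlib

open MeasureTheory ContinuousLinearMap

noncomputable section

variable {Ω : Type*} [MeasurableSpace Ω]

/-- `T` is the quantization `f̂` of the nonnegative random variable `f`:
the integral operator with kernel `min (f x) (f y)`. -/
def IsQuantization (ν : Measure Ω) (f : Ω → ℝ) (T : Lp ℂ 2 ν →L[ℂ] Lp ℂ 2 ν) : Prop :=
  ∀ g : Lp ℂ 2 ν,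
    (T g : Ω → ℂ) =ᵐ[ν] fun y => ∫ x, ((min (f x) (f y) : ℝ) : ℂ) * (g : Ω → ℂ) x ∂ν

/-! The range of `f̂` consists of functions vanishing where `f` does, and `f̂` kills every `g`
with `f g = 0`; disjoint supports therefore give `f̂₁ f̂₂ = 0` and `f̂₁† f̂₂ = 0` (orthogonal
ranges). Without invoking self-adjointness of `f̂` (which would need Fubini), `f̂₁ f̂₂† = 0` follows
by testing `f̂₂† h` against `min (f₁, c) · f̂₂† h`. The norm identity is then pure C*-algebra:
if `a† b = a b† = 0` then `‖a + b‖² = ‖a† a + b† b‖`, and for self-adjoint `p, q` with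
`p q = q p = 0` the identity `‖x ^ 2 ^ n‖ = ‖x‖ ^ 2 ^ n` gives
`‖p + q‖ ^ 2 ^ n ≤ ‖p‖ ^ 2 ^ n + ‖q‖ ^ 2 ^ n ≤ 2 max (‖p‖, ‖q‖) ^ 2 ^ n` for all `n`. -/

open scoped InnerProductSpace

lemma Real.le_of_forall_pow_two_pow_le_two_mul {c m : ℝ} (hm : 0 ≤ m)
    (h : ∀ n : ℕ, c ^ 2 ^ n ≤ 2 * m ^ 2 ^ n) : c ≤ m := by
  by_contra! hmc
  rcases hm.eq_or_lt with rfl | hm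
  · have := h 0
    norm_num at this
    linarith
  · have hr : 1 < c / m := (one_lt_div hm).mpr hmc
    obtain ⟨n, hn⟩ := pow_unbounded_of_one_lt 2 hr
    have h₁ : (c / m) ^ 2 ^ n ≤ 2 := by
      rw [div_pow, div_le_iff₀ (by positivity)]
      linarith [h n]
    have h₂ : (c / m) ^ n ≤ (c / m) ^ 2 ^ n :=
      pow_le_pow_right₀ hr.le Nat.lt_two_pow_self.le
    linarith

lemma add_pow_succ_of_mul_eq_zero {R : Type*} [Semiring R] {p q : R}
    (hpq : p * q = 0) (hqp : q * p = 0) (k : ℕ) :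
    (p + q) ^ (k + 1) = p ^ (k + 1) + q ^ (k + 1) := by
  induction k with
  | zero => simp
  | succ k ih =>
    have hpq' : p ^ (k + 1) * q = 0 := by rw [pow_succ, mul_assoc, hpq, mul_zero]
    have hqp' : q ^ (k + 1) * p = 0 := by rw [pow_succ, mul_assoc, hqp, mul_zero]
    rw [pow_succ, ih, add_mul, mul_add, mul_add, hpq', hqp', add_zero, zero_add, ← pow_succ,
      ← pow_succ]

section CStarRing

variable {R : Type*} [NormedRing R] [StarRing R] [CStarRing R]

lemma CStarRing.norm_le_norm_add_of_star_mul_eq_zero {a b : R} (h : star a * b = 0) :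
    ‖a‖ ≤ ‖a + b‖ := by
  rcases (norm_nonneg a).eq_or_lt with ha | ha
  · rw [← ha]
    exact norm_nonneg _
  · refine le_of_mul_le_mul_left ?_ ha
    calc ‖a‖ * ‖a‖ = ‖star a * (a + b)‖ := by
          rw [mul_add, h, add_zero, CStarRing.norm_star_mul_self]
    _ ≤ ‖a‖ * ‖a + b‖ := by
          simpa only [norm_star] using norm_mul_le (star a) (a + b)

lemma IsSelfAdjoint.norm_add_le_max_of_mul_eq_zero {p q : R} (hp : IsSelfAdjoint p)
    (hq : IsSelfAdjoint q) (hpq : p * q = 0) (hqp : q * p = 0) :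
    ‖p + q‖ ≤ max ‖p‖ ‖q‖ := by
  refine Real.le_of_forall_pow_two_pow_le_two_mul (by positivity) fun n => ?_
  obtain ⟨k, hk⟩ := Nat.exists_eq_add_one_of_ne_zero (pow_ne_zero n two_ne_zero)
  calc ‖p + q‖ ^ 2 ^ n = ‖(p + q) ^ 2 ^ n‖ := ((hp.add hq).norm_pow_two_pow n).symm
  _ = ‖p ^ 2 ^ n + q ^ 2 ^ n‖ := by rw [hk, add_pow_succ_of_mul_eq_zero hpq hqp]
  _ ≤ ‖p‖ ^ 2 ^ n + ‖q‖ ^ 2 ^ n := by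
        rw [← hp.norm_pow_two_pow, ← hq.norm_pow_two_pow]
        exact norm_add_le _ _
  _ ≤ 2 * max ‖p‖ ‖q‖ ^ 2 ^ n := by
        rw [two_mul]
        gcongr
        exacts [le_max_left _ _, le_max_right _ _]

lemma CStarRing.norm_add_eq_max_of_star_mul_eq_zero {a b : R} (h₁ : star a * b = 0)
    (h₂ : a * star b = 0) : ‖a + b‖ = max ‖a‖ ‖b‖ := by
  have h₁' : star b * a = 0 := by simpa using congrArg star h₁
  have h₂' : b * star a = 0 := by simpa using congrArg star h₂
  refine le_antisymm ?_ (max_le (norm_le_norm_add_of_star_mul_eq_zero h₁) ?_)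
  swap
  · rw [add_comm]
    exact norm_le_norm_add_of_star_mul_eq_zero h₁'
  have hab : star a * a * (star b * b) = 0 := by
    rw [mul_assoc, ← mul_assoc a, h₂, zero_mul, mul_zero]
  have hba : star b * b * (star a * a) = 0 := by
    rw [mul_assoc, ← mul_assoc b, h₂', zero_mul, mul_zero]
  have hsq : ‖a + b‖ ^ 2 ≤ max ‖a‖ ‖b‖ ^ 2 := calc
    ‖a + b‖ ^ 2 = ‖star a * a + star b * b‖ := by
          rw [sq, ← CStarRing.norm_star_mul_self, star_add, add_mul, mul_add, mul_add, h₁, h₁',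
            add_zero, zero_add]
    _ ≤ max ‖star a * a‖ ‖star b * b‖ :=
          (IsSelfAdjoint.star_mul_self a).norm_add_le_max_of_mul_eq_zero
            (IsSelfAdjoint.star_mul_self b) hab hba
    _ ≤ max ‖a‖ ‖b‖ ^ 2 := by
          rw [CStarRing.norm_star_mul_self, CStarRing.norm_star_mul_self, ← sq, ← sq]
          exact max_le (by gcongr; exact le_max_left _ _) (by gcongr; exact le_max_right _ _)
  exact (pow_le_pow_iff_left₀ (norm_nonneg _) (by positivity) two_ne_zero).mp hsq

end CStarRing

lemma MeasureTheory.L2.eq_zero_of_inner_eq_zero_of_ae_eq_nonneg_mul {ν : Measure Ω}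
    {g : Ω → ℝ} (hg : ∀ x, 0 ≤ g x) {v w : Lp ℂ 2 ν}
    (hw : w =ᵐ[ν] fun x => (g x : ℂ) * v x) (h : ⟪v, w⟫_ℂ = 0) : w = 0 := by
  set ψ : Ω → ℝ := fun x => g x * ‖v x‖ ^ 2
  have hψ : (fun x => ⟪v x, w x⟫_ℂ) =ᵐ[ν] fun x => (ψ x : ℂ) := by
    filter_upwards [hw] with x hx
    rw [hx, RCLike.inner_apply, mul_assoc, Complex.mul_conj']
    simp [ψ]
  have hψint : Integrable ψ ν := by
    simpa using ((L2.integrable_inner v w).congr hψ).re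
  have hψ0 : ψ =ᵐ[ν] 0 := by
    have hψ_nonneg : 0 ≤ ψ := fun x => mul_nonneg (hg x) (sq_nonneg _)
    refine (integral_eq_zero_iff_of_nonneg hψ_nonneg hψint).mp ?_
    rw [L2.inner_def, integral_congr_ae hψ, integral_complex_ofReal] at h
    exact_mod_cast h
  rw [Lp.eq_zero_iff_ae_eq_zero]
  filter_upwards [hw, hψ0] with x hwx hψx
  rcases mul_eq_zero.mp hψx with hgx | hvx
  · simp [hwx, hgx]
  · simp_all

namespace IsQuantization

variable {ν : Measure Ω} {f f₁ f₂ : Ω → ℝ} {T T₁ T₂ : Lp ℂ 2 ν →L[ℂ] Lp ℂ 2 ν}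

lemma apply_eq_zero_of_ae_eq_zero_or (hf : ∀ x, 0 ≤ f x) (hT : IsQuantization ν f T)
    {v : Lp ℂ 2 ν} (hv : ∀ᵐ x ∂ν, f x = 0 ∨ v x = 0) : T v = 0 := by
  rw [Lp.eq_zero_iff_ae_eq_zero]
  refine (hT v).trans (Filter.Eventually.of_forall fun y => integral_eq_zero_of_ae ?_)
  filter_upwards [hv] with x hx
  rcases hx with hfx | hvx
  · simp [hfx, hf y]
  · simp [hvx]

lemma apply_ae_eq_zero_of_eq_zero (hf : ∀ x, 0 ≤ f x) (hT : IsQuantization ν f T)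
    (g : Lp ℂ 2 ν) : ∀ᵐ y ∂ν, f y = 0 → T g y = 0 := by
  filter_upwards [hT g] with y hy hfy
  rw [hy]
  exact integral_eq_zero_of_ae (Filter.Eventually.of_forall fun x => by simp [hfy, hf x])

lemma comp_eq_zero (hf₁ : ∀ x, 0 ≤ f₁ x) (hf₂ : ∀ x, 0 ≤ f₂ x)
    (hT₁ : IsQuantization ν f₁ T₁) (hT₂ : IsQuantization ν f₂ T₂)
    (hd : ∀ᵐ x ∂ν, f₁ x = 0 ∨ f₂ x = 0) :
    T₁ ∘L T₂ = 0 := by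
  ext1 g
  refine hT₁.apply_eq_zero_of_ae_eq_zero_or hf₁ ?_
  filter_upwards [hd, hT₂.apply_ae_eq_zero_of_eq_zero hf₂ g] with x hx h₂
  exact hx.imp_right h₂

lemma adjoint_comp_eq_zero (hf₁ : ∀ x, 0 ≤ f₁ x) (hf₂ : ∀ x, 0 ≤ f₂ x)
    (hT₁ : IsQuantization ν f₁ T₁) (hT₂ : IsQuantization ν f₂ T₂)
    (hd : ∀ᵐ x ∂ν, f₁ x = 0 ∨ f₂ x = 0) :
    adjoint T₁ ∘L T₂ = 0 := by
  ext1 g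
  refine ext_inner_left ℂ fun w => ?_
  rw [comp_apply, adjoint_inner_right, zero_apply, inner_zero_right, L2.inner_def]
  refine integral_eq_zero_of_ae ?_
  filter_upwards [hd, hT₁.apply_ae_eq_zero_of_eq_zero hf₁ w,
    hT₂.apply_ae_eq_zero_of_eq_zero hf₂ g] with x hx h₁ h₂
  rcases hx with hx | hx
  · simp [h₁ hx]
  · simp [h₂ hx]

lemma apply_eq_zero_of_forall_inner_eq_zero (hf₁ : ∀ x, 0 ≤ f₁ x)
    (hT₁ : IsQuantization ν f₁ T₁) (hd : ∀ᵐ x ∂ν, f₁ x = 0 ∨ f₂ x = 0) {v : Lp ℂ 2 ν}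
    (hv : ∀ w : Lp ℂ 2 ν, (∀ᵐ x ∂ν, f₂ x = 0 ∨ w x = 0) → ⟪v, w⟫_ℂ = 0) : T₁ v = 0 := by
  rw [Lp.eq_zero_iff_ae_eq_zero]
  refine (hT₁ v).trans (Filter.Eventually.of_forall fun y => ?_)
  set g : Ω → ℝ := fun x => min (f₁ x) (f₁ y)
  have hg : ∀ x, 0 ≤ g x := fun x => le_min (hf₁ x) (hf₁ y)
  -- `f₁` need not be measurable; if `g * v` is not, the integral is `0` by convention.
  by_cases hm : AEStronglyMeasurable (fun x => (g x : ℂ) * v x) ν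
  swap
  · exact integral_non_aestronglyMeasurable hm
  have hmem : MemLp (fun x => (g x : ℂ) * v x) 2 ν := by
    refine ((Lp.memLp v).const_mul (f₁ y : ℂ)).of_le hm (.of_forall fun x => ?_)
    simp only [norm_mul, Complex.norm_real, Real.norm_eq_abs, abs_of_nonneg (hg x),
      abs_of_nonneg (hf₁ y)]
    gcongr
    exact min_le_right _ _
  -- `g * v` is killed by `T₂`, hence orthogonal to `v`, while `⟪v, g * v⟫ = ∫ g |v|²`.
  have hgv : hmem.toLp _ = 0 := by
    refine L2.eq_zero_of_inner_eq_zero_of_ae_eq_nonneg_mul hg hmem.coeFn_toLp (hv _ ?_)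
    filter_upwards [hd, hmem.coeFn_toLp] with x hx hgvx
    refine hx.symm.imp_right fun hf₁x => ?_
    simp [hgvx, g, hf₁x, hf₁ y]
  refine integral_eq_zero_of_ae ?_
  filter_upwards [hmem.coeFn_toLp, Lp.coeFn_zero ℂ 2 ν] with x h₁ h₀
  rw [← h₁, hgv, h₀]

lemma comp_adjoint_eq_zero (hf₁ : ∀ x, 0 ≤ f₁ x) (hf₂ : ∀ x, 0 ≤ f₂ x)
    (hT₁ : IsQuantization ν f₁ T₁) (hT₂ : IsQuantization ν f₂ T₂)
    (hd : ∀ᵐ x ∂ν, f₁ x = 0 ∨ f₂ x = 0) :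
    T₁ ∘L adjoint T₂ = 0 := by
  ext1 g
  rw [comp_apply, zero_apply]
  refine hT₁.apply_eq_zero_of_forall_inner_eq_zero hf₁ hd fun w hw => ?_
  rw [adjoint_inner_left, hT₂.apply_eq_zero_of_ae_eq_zero_or hf₂ hw, inner_zero_right]

end IsQuantization

theorem stmt10_general (ν : Measure Ω) (f₁ f₂ : Ω → ℝ)
    (hf₁0 : ∀ x, 0 ≤ f₁ x) (hf₂0 : ∀ x, 0 ≤ f₂ x)
    (hdisj : (fun x => f₁ x * f₂ x) =ᵐ[ν] 0)
    (T₁ T₂ : Lp ℂ 2 ν →L[ℂ] Lp ℂ 2 ν)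
    (hT₁ : IsQuantization ν f₁ T₁) (hT₂ : IsQuantization ν f₂ T₂) :
    T₁ ∘L T₂ = 0 ∧ T₂ ∘L T₁ = 0 ∧ ‖T₁ + T₂‖ = max ‖T₁‖ ‖T₂‖ := by
  have hd : ∀ᵐ x ∂ν, f₁ x = 0 ∨ f₂ x = 0 := hdisj.mono fun x hx => mul_eq_zero.mp hx
  refine ⟨hT₁.comp_eq_zero hf₁0 hf₂0 hT₂ hd,
    hT₂.comp_eq_zero hf₂0 hf₁0 hT₁ (hd.mono fun x => Or.symm), ?_⟩
  exact CStarRing.norm_add_eq_max_of_star_mul_eq_zero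
    (hT₁.adjoint_comp_eq_zero hf₁0 hf₂0 hT₂ hd) (hT₁.comp_adjoint_eq_zero hf₁0 hf₂0 hT₂ hd)

theorem stmt10 (ν : Measure Ω) [IsProbabilityMeasure ν] (f₁ f₂ : Ω → ℝ)
    (hf₁0 : ∀ x, 0 ≤ f₁ x) (hf₂0 : ∀ x, 0 ≤ f₂ x)
    (hdisj : (fun x => f₁ x * f₂ x) =ᵐ[ν] 0)
    (T₁ T₂ : Lp ℂ 2 ν →L[ℂ] Lp ℂ 2 ν)
    (hT₁ : IsQuantization ν f₁ T₁) (hT₂ : IsQuantization ν f₂ T₂) :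
    T₁ ∘L T₂ = 0 ∧ T₂ ∘L T₁ = 0 ∧ ‖T₁ + T₂‖ = max ‖T₁‖ ‖T₂‖ :=
  stmt10_general ν f₁ f₂ hf₁0 hf₂0 hdisj T₁ T₂ hT₁ hT₂
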